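/- arXiv:2005.04252 — 8 statements merged into one kernel-verified Lean document; each statement's English description precedes it below -/
import Mathlib

section
/- Let M be a matroid on a finite ground set E and let ℓ : E → ℝ be generic. Enumerate the bases of M as B₁, …, Bₙ so that ℓ(B₁) < ℓ(B₂) < … < ℓ(Bₙ). Then this enumeration is a shelling order of the independence complex I(M): for all 1 ≤ i < j ≤ n there exists k < j with B_i ∩ B_j ⊆ B_k ∩ B_j and |B_k ∩ B_j| = |B_j| − 1. (Theorem 1.2, part A: ordering the bases by ℓ-weight is a line shelling of I(M).) -/
open scoped BigOperators

/-- The `ℓ`-weight of a set `A ⊆ E`: the sum of the values of `ℓ` on `A`. -/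
noncomputable def wt {α : Type*} (ℓ : α → ℝ) (A : Set α) : ℝ := ∑ᶠ e ∈ A, ℓ e

/-- `ℓ` is generic for `M` if it is injective on the ground set and distinct
bases have distinct `ℓ`-weights. -/
def Generic {α : Type*} (M : Matroid α) (ℓ : α → ℝ) : Prop :=
  Function.Injective ℓ ∧
    ∀ ⦃B B' : Set α⦄, M.IsBase B → M.IsBase B' → B ≠ B' → wt ℓ B ≠ wt ℓ B'

/-- `F 0, …, F (n-1)` is a shelling order: for all `i < j` there is `k < j` with
`F i ∩ F j ⊆ F k ∩ F j` and `|F k ∩ F j| = |F j| - 1`. -/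
def IsShelling {α : Type*} {n : ℕ} (F : Fin n → Set α) : Prop :=
  ∀ i j : Fin n, i < j → ∃ k : Fin n, k < j ∧ F i ∩ F j ⊆ F k ∩ F j ∧
    (F k ∩ F j).ncard = (F j).ncard - 1

/-- `B` enumerates (without repetition) all the bases of `M`. -/
def EnumeratesBases {α : Type*} (M : Matroid α) {n : ℕ} (B : Fin n → Set α) : Prop :=
  Function.Injective B ∧ (∀ i, M.IsBase (B i)) ∧ ∀ C, M.IsBase C → ∃ i, B i = C

/-!
Let `A`, `B` be bases with `ℓ(A) < ℓ(B)`. For `f ∈ A \ B`, symmetric basis exchange (a second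
element `e` of the fundamental circuit of `f` in `B` and the fundamental cocircuit of `f` in `A`)
makes both `A - f + e` and `B - e + f` bases. Either `ℓ f < ℓ e`, or `A - f + e` is a base still
lighter than `B` and closer to it, and we induct on `|A \ B|`. So some base `B - e + f` with
`e ∉ A` is lighter than `B`, hence earlier in the order, and it meets `B` in `B - e ⊇ A ∩ B`.
-/

open Set

section Weight

variable {α : Type*} {ℓ : α → ℝ} {s : Set α} {e f : α}

lemma wt_insert (hs : s.Finite) (he : e ∉ s) : wt ℓ (insert e s) = ℓ e + wt ℓ s :=
  finsum_mem_insert ℓ he hs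

lemma wt_insert_sdiff_singleton (hs : s.Finite) (he : e ∈ s) (hf : f ∉ s) :
    wt ℓ (insert f s \ {e}) = wt ℓ s - ℓ e + ℓ f := by
  have hfe : f ≠ e := ne_of_mem_of_not_mem he hf |>.symm
  have hf' := wt_insert (ℓ := ℓ) (hs.sdiff (t := {e})) (fun h ↦ hf h.1)
  have he' := wt_insert (ℓ := ℓ) (hs.sdiff (t := {e})) (e := e) (by simp)
  rw [insert_sdiff_singleton, insert_eq_of_mem he] at he'
  rw [← insert_sdiff_singleton_comm hfe]
  linarith

end Weight

namespace Matroid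

variable {α : Type*} {M : Matroid α} {A B : Set α} {f : α} {ℓ : α → ℝ}

lemma IsBase.exists_symm_exchange (hA : M.IsBase A) (hB : M.IsBase B) (hf : f ∈ A \ B) :
    ∃ e ∈ B \ A, M.IsBase (insert e A \ {f}) ∧ M.IsBase (insert f B \ {e}) := by
  have hfE : f ∈ M.E := hA.subset_ground hf.1
  obtain ⟨e, ⟨heC, heK⟩, hef⟩ :=
    ((hB.fundCircuit_isCircuit hfE hf.2).isCocircuit_inter_nontrivial
      (M.fundCocircuit_isCocircuit hf.1 hA)
      ⟨f, M.mem_fundCircuit f B, M.mem_fundCocircuit f A⟩).exists_ne f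
  have heB : e ∈ B := by
    simpa [hef] using M.fundCircuit_subset_insert f B heC
  have heEA : e ∈ M.E \ A := by
    simpa [hef] using M.fundCocircuit_subset_insert_compl f A heK
  refine ⟨e, ⟨heB, heEA.2⟩, hA.exchange_isBase_of_indep' hf.1 heEA.2 ?_,
    hB.exchange_isBase_of_indep' heB hf.2 ?_⟩
  · rw [hA.mem_fundCocircuit_iff_mem_fundCircuit] at heK
    rwa [← hA.indep.mem_fundCircuit_iff (by rw [hA.closure_eq]; exact heEA.1) heEA.2]
  · rwa [← hB.indep.mem_fundCircuit_iff (by rwa [hB.closure_eq]) hf.2]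

lemma IsBase.exists_exchange_of_wt_lt [M.RankFinite] (hA : M.IsBase A) (hB : M.IsBase B)
    (hAB : wt ℓ A < wt ℓ B) :
    ∃ e ∈ B \ A, ∃ f ∈ A \ B, M.IsBase (insert f B \ {e}) ∧ ℓ f < ℓ e := by
  induction hm : (A \ B).ncard using Nat.strong_induction_on generalizing A with
  | _ m ih =>
  obtain ⟨f, hf⟩ : (A \ B).Nonempty := by
    rw [nonempty_iff_ne_empty, Ne, sdiff_eq_empty]
    exact fun hsub ↦ hAB.ne (by rw [hA.eq_of_subset_isBase hB hsub])
  obtain ⟨e, he, hA', hB'⟩ := hA.exists_symm_exchange hB hf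
  obtain hfe | hef := lt_or_ge (ℓ f) (ℓ e)
  · exact ⟨e, he, f, hf, hB', hfe⟩
  have hsdiff : (insert e A \ {f}) \ B = (A \ B) \ {f} := by
    ext x; simp only [mem_sdiff, mem_insert_iff, mem_singleton_iff]
    constructor
    · rintro ⟨⟨rfl | hx, hxf⟩, hxB⟩
      exacts [absurd he.1 hxB, ⟨⟨hx, hxB⟩, hxf⟩]
    · rintro ⟨⟨hx, hxB⟩, hxf⟩
      exact ⟨⟨Or.inr hx, hxf⟩, hxB⟩
  have hlt : ((insert e A \ {f}) \ B).ncard < m := by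
    rw [hsdiff, ← hm]
    exact ncard_sdiff_singleton_lt_of_mem hf hA.finite.sdiff
  have hwt : wt ℓ (insert e A \ {f}) < wt ℓ B := by
    rw [wt_insert_sdiff_singleton hA.finite hf.1 he.2]
    linarith
  obtain ⟨e', he', f', hf', hB'', hlt'⟩ := ih _ hlt hA' hwt rfl
  refine ⟨e', ⟨he'.1, fun he'A ↦ he'.2 ⟨mem_insert_of_mem e he'A, ?_⟩⟩, f',
    (hsdiff ▸ hf').1, hB'', hlt'⟩
  rintro rfl
  exact hf.2 he'.1

end Matroid

lemma isShelling_of_exists_inter_eq_sdiff_singleton {α : Type*} {n : ℕ} {F : Fin n → Set α}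
    (h : ∀ i j, i < j → ∃ k < j, ∃ e ∈ F j \ F i, F k ∩ F j = F j \ {e}) : IsShelling F := by
  intro i j hij
  obtain ⟨k, hkj, e, he, hk⟩ := h i j hij
  refine ⟨k, hkj, ?_, by rw [hk, ncard_sdiff_singleton_of_mem he.1]⟩
  rw [hk]
  exact fun x hx ↦ ⟨hx.2, by rintro rfl; exact he.2 hx.1⟩

theorem weight_order_is_shelling_general {α : Type*} [Fintype α]
    (M : Matroid α)
    (ℓ : α → ℝ)
    {n : ℕ} (B : Fin n → Set α) (hB : EnumeratesBases M B)
    (hsort : ∀ i j : Fin n, i < j → wt ℓ (B i) < wt ℓ (B j)) :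
    IsShelling B := by
  obtain ⟨-, hbase, hall⟩ := hB
  have hmono : StrictMono fun i ↦ wt ℓ (B i) := fun i j ↦ hsort i j
  refine isShelling_of_exists_inter_eq_sdiff_singleton fun i j hij ↦ ?_
  obtain ⟨e, he, f, hf, hexch, hfe⟩ :=
    (hbase i).exists_exchange_of_wt_lt (hbase j) (hsort i j hij)
  obtain ⟨k, hk⟩ := hall _ hexch
  refine ⟨k, hmono.lt_iff_lt.mp ?_, e, he, ?_⟩
  · rw [hk, wt_insert_sdiff_singleton (hbase j).finite he.1 hf.2]
    linarith
  · rw [hk, sdiff_inter_right_comm, insert_inter_of_notMem hf.2, inter_self]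

theorem weight_order_is_shelling {α : Type*} [Fintype α]
    (M : Matroid α) (hE : M.E = Set.univ)
    (ℓ : α → ℝ) (hgen : Generic M ℓ)
    {n : ℕ} (B : Fin n → Set α) (hB : EnumeratesBases M B)
    (hsort : ∀ i j : Fin n, i < j → wt ℓ (B i) < wt ℓ (B j)) :
    IsShelling B :=
  weight_order_is_shelling_general M ℓ B hB hsort
end

section
/- Let M be a matroid on a finite ground set E and let ℓ : E → ℝ be generic, with <_ℓ the induced linear order on E. Then for every basis B of M and every subset S ⊆ B, the following are equivalent: (i) there exists a basis B' of M with ℓ(B') < ℓ(B) and S ⊆ B'; (ii) IP_{<_ℓ}(B) is not a subset of S. Consequently, in the shelling order of I(M) obtained by increasing ℓ-weight, the restriction set of each basis B equals its internally passive set IP_{<_ℓ}(B). (Theorem 1.2, part B.) -/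
/-!
STATEMENT 1 (Theorem 1.2, part B): for a generic `ℓ`, a basis `B` and `S ⊆ B`,
there is a lighter basis containing `S` iff `IP_{<ℓ}(B) ⊄ S`; consequently, in
the shelling of `I(M)` by increasing `ℓ`-weight, the restriction set of each
basis equals its internally passive set for the order induced by `ℓ`.
-/

open scoped BigOperators

/-- The internally passive set of a basis `B` with respect to a strict order
`lt` on the ground set: elements `b ∈ B` for which some `b' ∉ B` with
`lt b' b` satisfies that `(B \ {b}) ∪ {b'}` is a basis. -/
def IP {α : Type*} (M : Matroid α) (lt : α → α → Prop) (B : Set α) : Set α :=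
  {b | b ∈ B ∧ ∃ b', b' ∉ B ∧ lt b' b ∧ M.IsBase (insert b' (B \ {b}))}

/-- The restriction set of the facet `F j` in the enumeration `F`. -/
def restrictionSet {α : Type*} {n : ℕ} (F : Fin n → Set α) (j : Fin n) : Set α :=
  {x | x ∈ F j ∧ ∃ i : Fin n, i < j ∧ F j \ {x} ⊆ F i}

/-!
If no single exchange `C - b + e` with `b ∈ C \ S` makes the basis `C` lighter, then `C` is a
lightest basis containing `S`. Indeed, given another basis `B' ⊇ S`, take `b ∈ C \ B'` of
largest weight, exchange it for some `b' ∈ B' \ C` (so `ℓ b < ℓ b'`), and then exchange `b'` out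
of `B'` for some `c ∈ C \ B'`: since `ℓ c ≤ ℓ b < ℓ b'`, this gives a lighter basis `B'' ⊇ S`
that is closer to `C`, and induction on `|B' \ C|` applies. For generic `ℓ`, "no lighter single
exchange outside `S`" says exactly `IP(C) ⊆ S`, and for `S = B \ {x}` the lighter bases containing
`S` are the earlier facets of the shelling containing `B \ {x}`.
-/

section

variable {α : Type*} {M : Matroid α} {ℓ : α → ℝ} {b e : α} {A C S B' : Set α}

theorem wt_insert_sdiff_singleton_s1 (hA : A.Finite) (hb : b ∈ A) (he : e ∉ A) :
    wt ℓ (insert e (A \ {b})) = wt ℓ A - ℓ b + ℓ e := by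
  have hremove : wt ℓ A = ℓ b + wt ℓ (A \ {b}) := by
    rw [wt, wt, ← finsum_mem_insert ℓ (a := b) (s := A \ {b}) (fun h => h.2 rfl) hA.sdiff,
      Set.insert_sdiff_singleton, Set.insert_eq_of_mem hb]
  rw [hremove, wt, finsum_mem_insert _ (fun h => he h.1) hA.sdiff, wt]
  ring

namespace Matroid

variable [M.RankFinite]

theorem IsBase.exists_isBase_wt_lt_of_ne (hC : M.IsBase C) (hS : S ⊆ C)
    (hexch : ∀ b ∈ C \ S, ∀ e ∉ C, M.IsBase (insert e (C \ {b})) → ℓ b < ℓ e)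
    (hB' : M.IsBase B') (hSB' : S ⊆ B') (hne : C ≠ B') :
    ∃ B'', M.IsBase B'' ∧ S ⊆ B'' ∧ wt ℓ B'' < wt ℓ B' ∧ (B'' \ C).ncard < (B' \ C).ncard := by
  have hCB' : (C \ B').Nonempty :=
    Set.sdiff_nonempty.2 fun hsub => hne (hC.eq_of_subset_isBase hB' hsub)
  obtain ⟨b, hb, hbmax⟩ := Set.exists_max_image (C \ B') ℓ hC.finite.sdiff hCB'
  obtain ⟨b', hb', hbase_b'⟩ := hC.exchange hB' hb
  have hbb' : ℓ b < ℓ b' := hexch b ⟨hb.1, fun hbS => hb.2 (hSB' hbS)⟩ b' hb'.2 hbase_b'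
  obtain ⟨c, hc, hbase_c⟩ := hB'.exchange hC hb'
  refine ⟨insert c (B' \ {b'}), hbase_c, ?_, ?_, ?_⟩
  · exact fun x hx => .inr ⟨hSB' hx, ne_of_mem_of_not_mem (hS hx) hb'.2⟩
  · rw [wt_insert_sdiff_singleton_s1 hB'.finite hb'.1 hc.2]
    linarith [hbmax c hc]
  · refine Set.ncard_lt_ncard (Set.ssubset_iff_sdiff_singleton.2 ⟨b', hb', ?_⟩) hB'.finite.sdiff
    rintro x ⟨rfl | hx, hxC⟩
    · exact absurd hc.1 hxC
    · exact ⟨⟨hx.1, hxC⟩, hx.2⟩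

theorem IsBase.wt_le_of_forall_exchange_lt (hC : M.IsBase C) (hS : S ⊆ C)
    (hexch : ∀ b ∈ C \ S, ∀ e ∉ C, M.IsBase (insert e (C \ {b})) → ℓ b < ℓ e)
    (hB' : M.IsBase B') (hSB' : S ⊆ B') : wt ℓ C ≤ wt ℓ B' := by
  induction h : (B' \ C).ncard using Nat.strong_induction_on generalizing B' with
  | _ n ih =>
    obtain rfl | hne := eq_or_ne C B'
    · exact le_rfl
    obtain ⟨B'', hB'', hSB'', hlt, hcard⟩ := hC.exists_isBase_wt_lt_of_ne hS hexch hB' hSB' hne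
    exact (ih _ (h ▸ hcard) hB'' hSB'' rfl).trans hlt.le

theorem IsBase.exists_isBase_wt_lt_superset_iff (hinj : Function.Injective ℓ) (hC : M.IsBase C)
    (hS : S ⊆ C) :
    (∃ B', M.IsBase B' ∧ wt ℓ B' < wt ℓ C ∧ S ⊆ B') ↔ ¬ IP M (fun x y => ℓ x < ℓ y) C ⊆ S := by
  constructor
  · rintro ⟨B', hB', hlt, hSB'⟩ hIP
    have hexch : ∀ b ∈ C \ S, ∀ e ∉ C, M.IsBase (insert e (C \ {b})) → ℓ b < ℓ e :=
      fun b hb e he hbase => lt_of_le_of_ne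
        (not_lt.1 fun hlt => hb.2 (hIP ⟨hb.1, e, he, hlt, hbase⟩))
        (hinj.ne (ne_of_mem_of_not_mem hb.1 he))
    exact hlt.not_ge (hC.wt_le_of_forall_exchange_lt hS hexch hB' hSB')
  · intro hIP
    obtain ⟨b, ⟨hbC, e, heC, hlt, hbase⟩, hbS⟩ := Set.not_subset.1 hIP
    refine ⟨_, hbase, ?_, fun x hx => .inr ⟨hS hx, ne_of_mem_of_not_mem hx hbS⟩⟩
    rw [wt_insert_sdiff_singleton_s1 hC.finite hbC heC]
    linarith

end Matroid

theorem EnumeratesBases.exists_lt_iff {n : ℕ} {B : Fin n → Set α} (hB : EnumeratesBases M B)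
    (hsort : StrictMono fun i => wt ℓ (B i)) (j : Fin n) (P : Set α → Prop) :
    (∃ i, i < j ∧ P (B i)) ↔ ∃ B', M.IsBase B' ∧ wt ℓ B' < wt ℓ (B j) ∧ P B' := by
  constructor
  · rintro ⟨i, hij, hP⟩
    exact ⟨B i, hB.2.1 i, hsort hij, hP⟩
  · rintro ⟨B', hB', hlt, hP⟩
    obtain ⟨i, rfl⟩ := hB.2.2 B' hB'
    exact ⟨i, hsort.lt_iff_lt.1 hlt, hP⟩

end

theorem restriction_sets_of_weight_shelling_are_IP_general {α : Type*} [Fintype α]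
    (M : Matroid α)
    (ℓ : α → ℝ) (hgen : Generic M ℓ)
    {n : ℕ} (B : Fin n → Set α) (hB : EnumeratesBases M B)
    (hsort : ∀ i j : Fin n, i < j → wt ℓ (B i) < wt ℓ (B j)) :
    (∀ C : Set α, M.IsBase C → ∀ S : Set α, S ⊆ C →
      ((∃ B' : Set α, M.IsBase B' ∧ wt ℓ B' < wt ℓ C ∧ S ⊆ B') ↔
        ¬ IP M (fun x y => ℓ x < ℓ y) C ⊆ S)) ∧
    (∀ j : Fin n, restrictionSet B j = IP M (fun x y => ℓ x < ℓ y) (B j)) := by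
  have hlighter := fun C (hC : M.IsBase C) S (hS : S ⊆ C) =>
    hC.exists_isBase_wt_lt_superset_iff hgen.1 hS
  refine ⟨hlighter, fun j => Set.ext fun x => ?_⟩
  have hIP_subset : IP M (fun x y => ℓ x < ℓ y) (B j) ⊆ B j := fun _ hb => hb.1
  rw [restrictionSet, Set.mem_ofPred_eq, hB.exists_lt_iff (fun i j => hsort i j) j (B j \ {x} ⊆ ·),
    hlighter _ (hB.2.1 j) _ Set.sdiff_subset]
  refine ⟨fun ⟨hx, hnot⟩ => ?_, fun hx => ⟨hx.1, fun h => (h hx).2 rfl⟩⟩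
  by_contra hxIP
  exact hnot (Set.subset_sdiff_singleton hIP_subset hxIP)

theorem restriction_sets_of_weight_shelling_are_IP {α : Type*} [Fintype α]
    (M : Matroid α) (hE : M.E = Set.univ)
    (ℓ : α → ℝ) (hgen : Generic M ℓ)
    {n : ℕ} (B : Fin n → Set α) (hB : EnumeratesBases M B)
    (hsort : ∀ i j : Fin n, i < j → wt ℓ (B i) < wt ℓ (B j)) :
    (∀ C : Set α, M.IsBase C → ∀ S : Set α, S ⊆ C →
      ((∃ B' : Set α, M.IsBase B' ∧ wt ℓ B' < wt ℓ C ∧ S ⊆ B') ↔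
        ¬ IP M (fun x y => ℓ x < ℓ y) C ⊆ S)) ∧
    (∀ j : Fin n, restrictionSet B j = IP M (fun x y => ℓ x < ℓ y) (B j)) :=
  restriction_sets_of_weight_shelling_are_IP_general M ℓ hgen B hB hsort
end

section
/- Let M be a matroid on a finite ground set E equipped with a linear order <, and enumerate the bases of M in lexicographic order: B precedes B' iff B ≠ B' and the <-smallest element of the symmetric difference B △ B' belongs to B. Then this enumeration is a shelling order of the independence complex I(M), and for every basis B the restriction set R(B) of this shelling equals the internally passive set IP_<(B). (Björner's theorem, recovered in Section 4.) -/
/-- `B` lexicographically precedes `B'`: they are distinct and the smallest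
element of the symmetric difference `B △ B'` belongs to `B`. -/
def LexLt {α : Type*} [LinearOrder α] (B B' : Set α) : Prop :=
  B ≠ B' ∧ ∃ x ∈ (B \ B') ∪ (B' \ B), x ∈ B ∧ ∀ y ∈ (B \ B') ∪ (B' \ B), x ≤ y

/-!
If `B i` precedes `B j`, the least element `x` of `B i △ B j` lies in `B i \ B j`. Exchanging
`x` into `B j` (the exchange axiom of the dual matroid) drops some `y ∈ B j \ B i` with `x < y`,
so the result is an earlier basis whose intersection with `B j` is the codimension-one face
`B j \ {y} ⊇ B i ∩ B j`. Conversely an earlier basis containing `B j \ {x}` is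
`insert x' (B j \ {x})` for some `x' ∉ B j`, and such a basis precedes `B j` exactly when
`x' < x`: this is the definition of `x` being internally passive.
-/

open Set

section

variable {α : Type*}

namespace LexLt

variable [LinearOrder α] {A D : Set α}

lemma exists_lt (h : LexLt A D) : ∃ x ∈ A \ D, ∀ y ∈ D \ A, x < y := by
  obtain ⟨-, x, hx, hxA, hmin⟩ := h
  have hxD : x ∉ D := by
    rcases hx with hx | hx
    exacts [hx.2, absurd hxA hx.2]
  exact ⟨x, ⟨hxA, hxD⟩, fun y hy ↦
    (hmin y (Or.inr hy)).lt_of_ne (by rintro rfl; exact hy.2 hxA)⟩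

lemma not_lexLt (h : LexLt A D) : ¬ LexLt D A := fun h' ↦ by
  obtain ⟨x, hx, hxlt⟩ := h.exists_lt
  obtain ⟨y, hy, hylt⟩ := h'.exists_lt
  exact (hxlt y hy).asymm (hylt x hx)

end LexLt

lemma lexLt_insert_sdiff_singleton_iff [LinearOrder α] {D : Set α} {x x' : α}
    (hx : x ∈ D) (hx' : x' ∉ D) : LexLt (insert x' (D \ {x})) D ↔ x' < x := by
  have hout : insert x' (D \ {x}) \ D = {x'} := by
    ext a; simp only [mem_sdiff, mem_insert_iff, mem_singleton_iff]; grind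
  have hin : D \ insert x' (D \ {x}) = {x} := by
    ext a; simp only [mem_sdiff, mem_insert_iff, mem_singleton_iff]; grind
  constructor
  · intro h
    obtain ⟨z, hz, hzlt⟩ := h.exists_lt
    rw [hout] at hz
    rw [hin] at hzlt
    exact hz ▸ hzlt x rfl
  · intro hlt
    refine ⟨fun h ↦ hx' (h ▸ mem_insert x' _), x', ?_, mem_insert _ _, ?_⟩
    · rw [hout, hin]; exact Or.inl rfl
    · rw [hout, hin]
      rintro y (rfl | rfl)
      exacts [le_rfl, hlt.le]

lemma lexLt_iff_lt_of_forall_lt [LinearOrder α] {n : ℕ} {B : Fin n → Set α}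
    (hlex : ∀ i j : Fin n, i < j → LexLt (B i) (B j)) {i j : Fin n} :
    LexLt (B i) (B j) ↔ i < j := by
  refine ⟨fun h ↦ ?_, hlex i j⟩
  rcases lt_trichotomy i j with hij | rfl | hji
  exacts [hij, absurd rfl h.1, absurd h (hlex j i hji).not_lexLt]

namespace Matroid

variable {M : Matroid α} {A D : Set α} {x : α}

/-- The exchange axiom of the dual matroid, read on complements. -/
lemma IsBase.rev_exchange (hA : M.IsBase A) (hD : M.IsBase D) (hx : x ∈ A \ D) :
    ∃ y ∈ D \ A, M.IsBase (insert x (D \ {y})) := by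
  have hxE : x ∈ M.E := hA.subset_ground hx.1
  obtain ⟨y, ⟨⟨hyE, hyA⟩, hyD⟩, hB⟩ := hD.compl_isBase_dual.exchange (e := x)
    hA.compl_isBase_dual (by simp [hxE, hx.1, hx.2])
  have hyD : y ∈ D := by simpa [hyE] using hyD
  refine ⟨y, ⟨hyD, hyA⟩, ?_⟩
  convert hB.compl_isBase_of_dual using 1
  ext a
  have := hD.subset_ground (a := a)
  simp only [mem_sdiff, mem_insert_iff, mem_singleton_iff]
  grind

lemma IsBase.eq_insert_sdiff_singleton (hA : M.IsBase A) (hD : M.IsBase D) (hne : A ≠ D)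
    (hx : x ∈ D) (hsub : D \ {x} ⊆ A) : ∃ x' ∉ D, A = insert x' (D \ {x}) := by
  have hxA : x ∉ A := fun hxA ↦ hne <| (hD.eq_of_subset_isBase hA fun a ha ↦ by
    by_cases hax : a = x
    exacts [hax ▸ hxA, hsub ⟨ha, hax⟩]).symm
  have hDA : D \ A = {x} := by
    ext a
    simp only [mem_sdiff, mem_singleton_iff]
    exact ⟨fun ha ↦ by_contra fun hax ↦ ha.2 (hsub ⟨ha.1, hax⟩), fun ha ↦ ha ▸ ⟨hx, hxA⟩⟩
  obtain ⟨x', hx', hAeq⟩ := hD.eq_exchange_of_sdiff_eq_singleton hA hDA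
  have hx'x : x' ≠ x := by rintro rfl; exact hx'.2 hx
  exact ⟨x', hx'.2, hAeq.trans (insert_sdiff_singleton_comm hx'x D).symm⟩

end Matroid

section LexicographicOrder

variable [LinearOrder α] {M : Matroid α} {n : ℕ} {B : Fin n → Set α}

lemma EnumeratesBases.exists_lt_eq_of_lexLt (hB : EnumeratesBases M B)
    (hlex : ∀ i j : Fin n, i < j → LexLt (B i) (B j)) {C : Set α} {j : Fin n}
    (hC : M.IsBase C) (h : LexLt C (B j)) : ∃ k < j, B k = C := by
  obtain ⟨k, rfl⟩ := hB.2.2 C hC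
  exact ⟨k, (lexLt_iff_lt_of_forall_lt hlex).1 h, rfl⟩

theorem isShelling_of_forall_lexLt (hB : EnumeratesBases M B)
    (hlex : ∀ i j : Fin n, i < j → LexLt (B i) (B j)) : IsShelling B := by
  intro i j hij
  obtain ⟨x, hx, hxlt⟩ := (hlex i j hij).exists_lt
  obtain ⟨y, hy, hC⟩ := (hB.2.1 i).rev_exchange (hB.2.1 j) hx
  obtain ⟨k, hkj, hk⟩ := hB.exists_lt_eq_of_lexLt hlex hC
    ((lexLt_insert_sdiff_singleton_iff hy.1 hx.2).2 (hxlt y hy))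
  have hinter : B k ∩ B j = B j \ {y} := by
    rw [hk, insert_inter_of_notMem hx.2, inter_eq_left.2 sdiff_subset]
  refine ⟨k, hkj, ?_, ?_⟩
  · rw [hinter]
    exact fun a ha ↦ ⟨ha.2, by rintro rfl; exact hy.2 ha.1⟩
  · rw [hinter, ncard_sdiff_singleton_of_mem hy.1]

theorem restrictionSet_eq_IP_of_forall_lexLt (hB : EnumeratesBases M B)
    (hlex : ∀ i j : Fin n, i < j → LexLt (B i) (B j)) (j : Fin n) :
    restrictionSet B j = IP M (· < ·) (B j) := by
  ext x
  constructor
  · rintro ⟨hxj, i, hij, hsub⟩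
    obtain ⟨x', hx', hi⟩ :=
      (hB.2.1 i).eq_insert_sdiff_singleton (hB.2.1 j) (hB.1.ne hij.ne) hxj hsub
    refine ⟨hxj, x', hx', ?_, hi ▸ hB.2.1 i⟩
    exact (lexLt_insert_sdiff_singleton_iff hxj hx').1 (hi ▸ hlex i j hij)
  · rintro ⟨hxj, x', hx', hlt, hC⟩
    obtain ⟨i, hij, hi⟩ := hB.exists_lt_eq_of_lexLt hlex hC
      ((lexLt_insert_sdiff_singleton_iff hxj hx').2 hlt)
    exact ⟨hxj, i, hij, hi ▸ subset_insert _ _⟩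

end LexicographicOrder

end

theorem lex_order_is_shelling_with_IP_restriction_sets_general
    {α : Type*} [LinearOrder α]
    (M : Matroid α)
    {n : ℕ} (B : Fin n → Set α) (hB : EnumeratesBases M B)
    (hlex : ∀ i j : Fin n, i < j → LexLt (B i) (B j)) :
    IsShelling B ∧
      ∀ j : Fin n, restrictionSet B j = IP M (· < ·) (B j) :=
  ⟨isShelling_of_forall_lexLt hB hlex, restrictionSet_eq_IP_of_forall_lexLt hB hlex⟩

theorem lex_order_is_shelling_with_IP_restriction_sets
    {α : Type*} [Fintype α] [LinearOrder α]
    (M : Matroid α) (hE : M.E = Set.univ)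
    {n : ℕ} (B : Fin n → Set α) (hB : EnumeratesBases M B)
    (hlex : ∀ i j : Fin n, i < j → LexLt (B i) (B j)) :
    IsShelling B ∧
      ∀ j : Fin n, restrictionSet B j = IP M (· < ·) (B j) :=
  lex_order_is_shelling_with_IP_restriction_sets_general M B hB hlex
end

section
/- Let M be a matroid on a finite ground set E with a linear order < on E, and let ≺ be a linear order on the set of bases of M such that whenever IP_<(B) is a proper subset of IP_<(B'), one has B ≺ B'. Then the enumeration of the bases in increasing ≺-order is a shelling order of the independence complex I(M). (Any linear extension of the internal order Int_<(M) is a shelling order; Theorem of Ardila–Castillo–Samper restated in Section 5.) -/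
/-!
For a base `B` and `b ∈ B`, the set `M.E \ cl(B - b)` is the fundamental cocircuit of `b`, and `b`
is internally passive exactly when it is not the least element of that cocircuit. Exchanging a
passive `b` for the least element `b₀` of its cocircuit gives a base `B - b + b₀` whose passive set
lies in `IP(B) - b`. Iterating this move shows that `IP(B) ⊆ A` forces `IP(B) ⊆ IP(A)`, while
exchanging at the largest element of `A ∆ B` shows that `IP(B) ⊆ A` and `IP(A) ⊆ B` force `A = B`.
So for `i < j` some passive `b ∈ B j` is missing from `B i`; the move at `b` produces a base
`B k` with `IP(B k) ⊂ IP(B j)`, hence `k < j`, and `B k ∩ B j = B j - b ⊇ B i ∩ B j`.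
-/

open Set

lemma Matroid.Indep.closure_sdiff_inter_closure_sdiff {α : Type*} {M : Matroid α} {I : Set α}
    (hI : M.Indep I) (X Y : Set α) :
    M.closure (I \ X) ∩ M.closure (I \ Y) = M.closure (I \ (X ∪ Y)) := by
  rw [← (hI.subset (union_subset sdiff_subset sdiff_subset)).closure_inter_eq_inter_closure,
    sdiff_inter_sdiff]

section InternalActivity

variable {α : Type*} {M : Matroid α} {A B : Set α} {b b₀ c e : α}

lemma IP_subset (lt : α → α → Prop) : IP M lt B ⊆ B := fun _ h => h.1

variable [LinearOrder α]

lemma mem_IP_iff (hB : M.IsBase B) :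
    b ∈ IP M (· < ·) B ↔ b ∈ B ∧ ∃ e ∈ M.E \ M.closure (B \ {b}), e < b := by
  refine ⟨fun ⟨hb, e, heB, heb, he⟩ => ⟨hb, e, ⟨he.subset_ground (mem_insert _ _), ?_⟩, heb⟩,
    fun ⟨hb, e, ⟨heE, he⟩, heb⟩ =>
      ⟨hb, e, ?_, heb, hB.exchange_base_of_notMem_closure hb he heE⟩⟩
  · exact (((hB.indep.subset sdiff_subset).insert_indep_iff_of_notMem
      fun h => heB h.1).1 he.indep).2
  · exact fun heB => he (M.subset_closure _ (sdiff_subset.trans hB.subset_ground) ⟨heB, heb.ne⟩)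

lemma mem_IP_of_mem_IP_insert_min (hB : M.IsBase B) (hb : b ∈ B)
    (hb₀ : b₀ ∈ M.E \ M.closure (B \ {b}))
    (hmin : ∀ x ∈ M.E \ M.closure (B \ {b}), b₀ ≤ x)
    (hc : c ∈ IP M (· < ·) (insert b₀ (B \ {b}))) : c ∈ IP M (· < ·) B := by
  have hC := hB.exchange_base_of_notMem_closure hb hb₀.2 hb₀.1
  obtain ⟨hcC, d, ⟨hdE, hdC⟩, hdc⟩ := (mem_IP_iff hC).1 hc
  obtain rfl | ⟨hcB, hcb⟩ := hcC
  · rw [insert_sdiff_self_of_notMem fun h =>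
      hb₀.2 (M.subset_closure _ (sdiff_subset.trans hB.subset_ground) h)] at hdC
    exact absurd (hmin d ⟨hdE, hdC⟩) hdc.not_ge
  refine (mem_IP_iff hB).2 ⟨hcB, ?_⟩
  by_cases hdBc : d ∈ M.closure (B \ {c})
  swap
  · exact ⟨d, ⟨hdE, hdBc⟩, hdc⟩
  have hdBb : d ∉ M.closure (B \ {b}) := by
    intro hdBb
    have hsub : B \ ({b} ∪ {c}) ⊆ insert b₀ (B \ {b}) \ {c} := fun x hx =>
      ⟨mem_insert_of_mem _ ⟨hx.1, fun h => hx.2 (.inl h)⟩, fun h => hx.2 (.inr h)⟩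
    have hcl := M.closure_subset_closure hsub
    rw [← hB.indep.closure_sdiff_inter_closure_sdiff] at hcl
    exact hdC (hcl ⟨hdBb, hdBc⟩)
  have hb₀c : b₀ < c := (hmin d ⟨hdE, hdBb⟩).trans_lt hdc
  by_cases hb₀Bc : b₀ ∈ M.closure (B \ {c})
  swap
  · exact ⟨b₀, ⟨hb₀.1, hb₀Bc⟩, hb₀c⟩
  -- Swapping `c` for `d` in `B - b + b₀` gives a base inside `cl(B - c)`, which misses `c`.
  have hD := hC.exchange_base_of_notMem_closure (mem_insert_of_mem _ ⟨hcB, hcb⟩) hdC hdE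
  have hBc := hD.closure_of_superset <| insert_subset hdBc fun x ⟨hx, hxc⟩ =>
    hx.elim (fun h => h ▸ hb₀Bc) fun h =>
      M.subset_closure _ (sdiff_subset.trans hB.subset_ground) ⟨h.1, hxc⟩
  rw [M.closure_closure] at hBc
  exact absurd (hBc ▸ hB.subset_ground hcB) (hB.indep.notMem_closure_sdiff_of_mem hcB)

lemma exists_isBase_insert_sdiff_IP_subset [M.Finite] (hB : M.IsBase B)
    (hb : b ∈ IP M (· < ·) B) :
    ∃ b₀ ∉ B, M.IsBase (insert b₀ (B \ {b})) ∧
      IP M (· < ·) (insert b₀ (B \ {b})) ⊆ IP M (· < ·) B \ {b} := by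
  obtain ⟨hbB, e, he, heb⟩ := (mem_IP_iff hB).1 hb
  obtain ⟨b₀, hb₀, hmin⟩ := exists_min_image _ id (M.set_finite _ sdiff_subset) ⟨e, he⟩
  have hb₀b : b₀ < b := (hmin e he).trans_lt heb
  refine ⟨b₀, fun hb₀B => hb₀.2 (M.subset_closure _ (sdiff_subset.trans hB.subset_ground)
      ⟨hb₀B, hb₀b.ne⟩), hB.exchange_base_of_notMem_closure hbB hb₀.2 hb₀.1,
    fun c hc => ⟨mem_IP_of_mem_IP_insert_min hB hbB hb₀ hmin hc, ?_⟩⟩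
  rintro rfl
  obtain h | h := IP_subset _ hc
  exacts [hb₀b.ne' h, h.2 rfl]

lemma mem_IP_of_forall_symmDiff_le (hA : M.IsBase A) (hB : M.IsBase B) (he : e ∈ B \ A)
    (hmax : ∀ x ∈ symmDiff A B, x ≤ e) : e ∈ IP M (· < ·) B := by
  obtain ⟨f, hf, hfB⟩ := hB.exchange hA he
  exact ⟨he.1, f, hf.2, (hmax f (.inl hf)).lt_of_ne fun h => he.2 (h ▸ hf.1), hfB⟩

lemma eq_of_IP_subset_of_IP_subset [M.RankFinite] (hA : M.IsBase A) (hB : M.IsBase B)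
    (hBA : IP M (· < ·) B ⊆ A) (hAB : IP M (· < ·) A ⊆ B) : A = B := by
  by_contra hne
  obtain ⟨e, he, hmax⟩ := exists_max_image (symmDiff A B) id (hA.finite.symmDiff hB.finite)
    (symmDiff_nonempty.2 hne)
  obtain he | he := he
  · exact he.2 (hAB (mem_IP_of_forall_symmDiff_le hB hA he (symmDiff_comm A B ▸ hmax)))
  · exact he.2 (hBA (mem_IP_of_forall_symmDiff_le hA hB he hmax))

lemma IP_subset_IP_of_IP_subset [M.Finite] (hA : M.IsBase A) (hB : M.IsBase B)
    (h : IP M (· < ·) B ⊆ A) : IP M (· < ·) B ⊆ IP M (· < ·) A := by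
  induction hn : (IP M (· < ·) A).ncard using Nat.strong_induction_on generalizing A with
  | _ n ih =>
  by_cases hAB : IP M (· < ·) A ⊆ B
  · rw [eq_of_IP_subset_of_IP_subset hA hB h hAB]
  obtain ⟨a, haA, haB⟩ := not_subset.1 hAB
  obtain ⟨a₀, -, hA', hA'A⟩ := exists_isBase_insert_sdiff_IP_subset hA haA
  have hlt := ncard_lt_ncard (hA'A.trans_ssubset (sdiff_singleton_ssubset.2 haA))
    (hA.finite.subset (IP_subset _))
  refine (ih _ (hn ▸ hlt) hA' (fun x hx => ?_) rfl).trans (hA'A.trans sdiff_subset)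
  exact mem_insert_of_mem _ ⟨h hx, fun hxa => haB (hxa ▸ IP_subset _ hx)⟩

end InternalActivity

theorem linear_extension_of_internal_order_is_shelling_general
    {α : Type*} [Fintype α] [LinearOrder α]
    (M : Matroid α)
    {n : ℕ} (B : Fin n → Set α) (hB : EnumeratesBases M B)
    (hext : ∀ i j : Fin n, IP M (· < ·) (B i) ⊂ IP M (· < ·) (B j) → i < j) :
    IsShelling B := by
  obtain ⟨hinj, hbase, hsurj⟩ := hB
  have : M.Finite := ⟨M.E.toFinite⟩
  intro i j hij
  have hji : ¬ IP M (· < ·) (B j) ⊆ B i := fun hsub => by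
    have hle := IP_subset_IP_of_IP_subset (hbase i) (hbase j) hsub
    have hge : IP M (· < ·) (B i) ⊆ IP M (· < ·) (B j) := by
      by_contra hge
      exact (hext j i (ssubset_of_subset_not_subset hle hge)).not_gt hij
    exact hij.ne (hinj (eq_of_IP_subset_of_IP_subset (hbase i) (hbase j)
      (hle.trans (IP_subset _)) (hge.trans (IP_subset _))))
  obtain ⟨b, hb, hbi⟩ := not_subset.1 hji
  obtain ⟨b₀, hb₀, hC, hCb⟩ := exists_isBase_insert_sdiff_IP_subset (hbase j) hb
  obtain ⟨k, hk⟩ := hsurj _ hC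
  have hkj : B k ∩ B j = B j \ {b} := by
    rw [hk, insert_inter_of_notMem hb₀, inter_eq_left.2 sdiff_subset]
  refine ⟨k, hext k j (hk ▸ hCb.trans_ssubset (sdiff_singleton_ssubset.2 hb)), ?_, ?_⟩
  · rw [hkj]
    exact fun x hx => ⟨hx.2, fun hxb => hbi (hxb ▸ hx.1)⟩
  · rw [hkj, ncard_sdiff_singleton_of_mem (IP_subset _ hb)]

theorem linear_extension_of_internal_order_is_shelling
    {α : Type*} [Fintype α] [LinearOrder α]
    (M : Matroid α) (hE : M.E = Set.univ)
    {n : ℕ} (B : Fin n → Set α) (hB : EnumeratesBases M B)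
    (hext : ∀ i j : Fin n, IP M (· < ·) (B i) ⊂ IP M (· < ·) (B j) → i < j) :
    IsShelling B :=
  linear_extension_of_internal_order_is_shelling_general M B hB hext
end

section
/- Let M be a matroid on a finite ground set E with a linear order < on E. Let B₁, …, B_s be distinct bases of M such that (i) the partial shelling condition holds: for all 1 ≤ i < j ≤ s there is k < j with B_i ∩ B_j ⊆ B_k ∩ B_j and |B_k ∩ B_j| = |B_j| − 1, and (ii) the set {B₁, …, B_s} is an order ideal of Int_<(M): whenever B is a basis with IP_<(B) ⊆ IP_<(B_i) for some i ≤ s, then B ∈ {B₁, …, B_s}. Then there exists an enumeration B_{s+1}, …, B_t of the remaining bases of M such that B₁, …, B_s, B_{s+1}, …, B_t is a shelling order of the independence complex I(M). (Corollary 5 (cor:extend): partial shellings that are order ideals of the internal order are extendable.) -/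
/-!
Order the remaining bases by the size of their internally passive sets. Let `C` be a new
basis and `A` an earlier one. If `IP(C) ⊆ A`, a fundamental-circuit argument upgrades this to
`IP(C) ⊆ IP(A)`; that is impossible, since the partial shelling is an order ideal and a basis
is determined by its internally passive set. So some `x ∈ IP(C)` lies outside `A`. Exchanging
`x` for the least element `y` of its fundamental cocircuit gives a basis `D = C - x + y` with
`IP(D) ⊆ IP(C) \ {x}`, so `D` comes before `C`, and `A ∩ C ⊆ D ∩ C = C - x`.
-/

open Set
open scoped symmDiff

namespace Matroid

variable {α : Type*} {M : Matroid α} {A B : Set α} {b : α}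

lemma IP_subset (M : Matroid α) (lt : α → α → Prop) (B : Set α) : IP M lt B ⊆ B :=
  fun _ hb ↦ hb.1

lemma IsBase.insert_sdiff_singleton_isBase_iff {y : α} (hB : M.IsBase B) (hb : b ∈ B)
    (hy : y ∉ B) : M.IsBase (insert y (B \ {b})) ↔ y ∈ M.E \ M.closure (B \ {b}) :=
  ⟨fun h ↦ ((hB.indep.subset sdiff_subset).insert_indep_iff_of_notMem
      fun hy' ↦ hy hy'.1).1 h.indep,
    fun h ↦ hB.exchange_base_of_notMem_closure hb h.2 h.1⟩

variable [LinearOrder α]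

/-- `b` is internally passive iff it is not the least element of its fundamental cocircuit
`M.E \ M.closure (B \ {b})`. -/
lemma IsBase.mem_IP_iff (hB : M.IsBase B) :
    b ∈ IP M (· < ·) B ↔ b ∈ B ∧ ∃ z ∈ M.E \ M.closure (B \ {b}), z < b := by
  refine and_congr_right fun hb ↦ ⟨?_, ?_⟩
  · rintro ⟨z, hzB, hzb, hbase⟩
    exact ⟨z, (hB.insert_sdiff_singleton_isBase_iff hb hzB).1 hbase, hzb⟩
  · rintro ⟨z, hz, hzb⟩
    have hzB : z ∉ B := fun hzB ↦
      hz.2 (M.subset_closure _ (sdiff_subset.trans hB.subset_ground) ⟨hzB, hzb.ne⟩)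
    exact ⟨z, hzB, hzb, (hB.insert_sdiff_singleton_isBase_iff hb hzB).2 hz⟩

lemma IsBase.mem_IP_of_mem_fundCircuit {w c : α} (hB : M.IsBase B) (hw : w ∈ M.E \ B)
    (hc : c ∈ M.fundCircuit w B) (hwc : w < c) : c ∈ IP M (· < ·) B := by
  have hcB : c ∈ B := ((M.fundCircuit_subset_insert w B) hc).resolve_left hwc.ne'
  have hind := (hB.indep.mem_fundCircuit_iff (hB.closure_eq ▸ hw.1) hw.2).1 hc
  rw [← insert_sdiff_singleton_comm hwc.ne] at hind
  refine hB.mem_IP_iff.2 ⟨hcB, w, ⟨hw.1, ?_⟩, hwc⟩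
  exact ((hB.indep.subset sdiff_subset).notMem_closure_iff hw.1).2 ⟨hind, fun h ↦ hw.2 h.1⟩

lemma IsBase.exists_lt_mem_sdiff_of_IP_subset {x : α} (hA : M.IsBase A) (hB : M.IsBase B)
    (hIP : IP M (· < ·) B ⊆ A) (hx : x ∈ A \ B) : ∃ z ∈ B \ A, z < x := by
  by_contra! hmin
  have hxE : x ∈ M.E \ B := ⟨hA.subset_ground hx.1, hx.2⟩
  have hC := hB.fundCircuit_isCircuit hxE.1 hxE.2
  refine hC.not_indep (hA.indep.subset fun c hc ↦ ?_)
  obtain rfl | hcx := eq_or_ne c x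
  · exact hx.1
  have hcB : c ∈ B := ((M.fundCircuit_subset_insert x B) hc).resolve_left hcx
  by_contra hcA
  exact hcA (hIP (hB.mem_IP_of_mem_fundCircuit hxE hc
    ((hmin c ⟨hcB, hcA⟩).lt_of_ne hcx.symm)))

lemma IsBase.eq_of_IP_eq [Finite α] (hA : M.IsBase A) (hB : M.IsBase B)
    (h : IP M (· < ·) A = IP M (· < ·) B) : A = B := by
  by_contra hne
  obtain ⟨x, hx, hmin⟩ := (toFinite (A ∆ B)).exists_minimal (symmDiff_nonempty.2 hne)
  obtain hx | hx := hx
  · obtain ⟨z, hz, hzx⟩ := hA.exists_lt_mem_sdiff_of_IP_subset hB (h ▸ IP_subset M _ A) hx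
    exact hzx.not_ge (hmin (Or.inr hz) hzx.le)
  · obtain ⟨z, hz, hzx⟩ := hB.exists_lt_mem_sdiff_of_IP_subset hA (h ▸ IP_subset M _ B) hx
    exact hzx.not_ge (hmin (Or.inl hz) hzx.le)

lemma IsBase.IP_subset_IP_of_IP_subset (hA : M.IsBase A) (hB : M.IsBase B)
    (hIP : IP M (· < ·) B ⊆ A) : IP M (· < ·) B ⊆ IP M (· < ·) A := by
  intro b hb
  have hbA := hIP hb
  obtain ⟨hbB, w, hw, hwb⟩ := hB.mem_IP_iff.1 hb
  refine hA.mem_IP_iff.2 ⟨hbA, ?_⟩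
  by_contra! hbmin
  have hlt : ∀ z ∈ M.E, z < b → z ∈ M.closure (A \ {b}) := fun z hz hzb ↦
    by_contra fun hz' ↦ hzb.not_ge (hbmin z ⟨hz, hz'⟩)
  have hwB : w ∉ B := fun hwB ↦
    hw.2 (M.subset_closure _ (sdiff_subset.trans hB.subset_ground) ⟨hwB, hwb.ne⟩)
  set C := M.fundCircuit w B
  have hC : M.IsCircuit C := hB.fundCircuit_isCircuit hw.1 hwB
  -- Otherwise `C \ {w} ⊆ B \ {b}` would span `w`.
  have hbC : b ∈ C := by
    by_contra hbC
    refine hw.2 (M.closure_subset_closure ?_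
      (hC.mem_closure_sdiff_singleton_of_mem (M.mem_fundCircuit w B)))
    rintro c ⟨hcC, hcw⟩
    exact ⟨((M.fundCircuit_subset_insert w B) hcC).resolve_left hcw, fun hcb ↦ hbC (hcb ▸ hcC)⟩
  refine hA.indep.notMem_closure_sdiff_of_mem hbA
    (M.closure_subset_closure_of_subset_closure (fun c hc ↦ ?_)
      (hC.mem_closure_sdiff_singleton_of_mem hbC))
  obtain ⟨hcC, hcb⟩ := hc
  obtain rfl | hcw := eq_or_ne c w
  · exact hlt c hw.1 hwb
  have hcB : c ∈ B := ((M.fundCircuit_subset_insert w B) hcC).resolve_left hcw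
  obtain hcb' | hbc := (Ne.lt_or_gt hcb)
  · exact hlt c (hB.subset_ground hcB) hcb'
  · exact M.subset_closure _ (sdiff_subset.trans hA.subset_ground)
      ⟨hIP (hB.mem_IP_of_mem_fundCircuit ⟨hw.1, hwB⟩ hcC (hwb.trans hbc)), hcb⟩

lemma exists_lt_notMem_closure_insert_of_min {K : Set α} {x d y e : α}
    (hdx : d ∉ M.closure (insert x K)) (hy : y ∈ M.E \ M.closure (insert d K))
    (hymin : ∀ z ∈ M.E \ M.closure (insert d K), y ≤ z)
    (he : e ∈ M.E \ M.closure (insert y K)) (hed : e < d) :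
    ∃ z ∈ M.E \ M.closure (insert x K), z < d := by
  by_cases hex : e ∈ M.closure (insert x K)
  · have heK : e ∉ M.closure K := fun h ↦
      he.2 (M.closure_subset_closure (subset_insert _ _) h)
    have hyK : y ∉ M.closure K := fun h ↦
      hy.2 (M.closure_subset_closure (subset_insert _ _) h)
    have hed' : e ∉ M.closure (insert d K) := fun h ↦
      hdx (closure_insert_congr ⟨hex, heK⟩ ▸ M.mem_closure_insert heK h)
    refine ⟨y, ⟨hy.1, fun hyx ↦ he.2 ?_⟩, (hymin e ⟨he.1, hed'⟩).trans_lt hed⟩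
    rwa [closure_insert_congr ⟨hyx, hyK⟩]
  · exact ⟨e, ⟨he.1, hex⟩, hed⟩

lemma IsBase.exists_isBase_inter_eq_and_IP_subset [Finite α] {x : α} (hB : M.IsBase B)
    (hx : x ∈ IP M (· < ·) B) :
    ∃ D, M.IsBase D ∧ D ∩ B = B \ {x} ∧ IP M (· < ·) D ⊆ IP M (· < ·) B \ {x} := by
  obtain ⟨hxB, y₀, hy₀, hy₀x⟩ := hB.mem_IP_iff.1 hx
  obtain ⟨y, hy, hymin⟩ :=
    (M.E \ M.closure (B \ {x})).exists_min_image id (toFinite _) ⟨y₀, hy₀⟩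
  have hyx : y < x := (hymin y₀ hy₀).trans_lt hy₀x
  have hyBx : y ∉ B \ {x} := fun h ↦
    hy.2 (M.subset_closure _ (sdiff_subset.trans hB.subset_ground) h)
  have hyB : y ∉ B := fun h ↦ hyBx ⟨h, hyx.ne⟩
  have hD := hB.exchange_base_of_notMem_closure hxB hy.2 hy.1
  refine ⟨_, hD, by rw [insert_inter_of_notMem hyB, inter_eq_left.2 sdiff_subset], ?_⟩
  intro d hd
  obtain ⟨hdD, e, he, hed⟩ := hD.mem_IP_iff.1 hd
  obtain rfl | hdBx := hdD
  · rw [insert_sdiff_self_of_notMem hyBx] at he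
    exact absurd (hymin e he) hed.not_ge
  refine ⟨hB.mem_IP_iff.2 ⟨hdBx.1, ?_⟩, hdBx.2⟩
  -- Pass to `K = B \ {x, d}`: then `B \ {d} = K + x`, `B \ {x} = K + d` and `D \ {d} = K + y`.
  have hxd : x ≠ d := fun h ↦ hdBx.2 h.symm
  have hyd : y ≠ d := fun h ↦ hyBx (h ▸ hdBx)
  have hBd : insert x (B \ {x, d}) = B \ {d} := by
    ext z; simp only [mem_insert_iff, mem_sdiff, mem_singleton_iff]; grind
  have hBx : insert d (B \ {x, d}) = B \ {x} := by
    ext z; simp only [mem_insert_iff, mem_sdiff, mem_singleton_iff]; grind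
  have hDd : insert y (B \ {x}) \ {d} = insert y (B \ {x, d}) := by
    ext z; simp only [mem_insert_iff, mem_sdiff, mem_singleton_iff]; grind
  rw [← hBd]
  rw [hDd] at he
  rw [← hBx] at hy hymin
  refine exists_lt_notMem_closure_insert_of_min ?_ hy hymin he hed
  exact hBd ▸ hB.indep.notMem_closure_sdiff_of_mem hdBx.1

lemma IsBase.exists_isBase_shelling_step [Finite α] {C : Set α} (hA : M.IsBase A)
    (hC : M.IsBase C) (h : ¬ IP M (· < ·) C ⊆ IP M (· < ·) A) :
    ∃ D, M.IsBase D ∧ IP M (· < ·) D ⊂ IP M (· < ·) C ∧ A ∩ C ⊆ D ∩ C ∧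
      (D ∩ C).ncard = C.ncard - 1 := by
  obtain ⟨x, hxC, hxA⟩ := not_subset.1 fun h' ↦ h (hA.IP_subset_IP_of_IP_subset hC h')
  obtain ⟨D, hD, hDC, hDIP⟩ := hC.exists_isBase_inter_eq_and_IP_subset hxC
  refine ⟨D, hD, ⟨hDIP.trans sdiff_subset, fun h ↦ (hDIP (h hxC)).2 rfl⟩, ?_, ?_⟩
  · rw [hDC]
    exact fun z hz ↦ ⟨hz.2, fun hzx ↦ hxA (hzx ▸ hz.1)⟩
  · rw [hDC, ncard_sdiff_singleton_of_mem (IP_subset M _ C hxC)]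

end Matroid

section Append

open Fin

variable {α β : Type*} {s n : ℕ}

lemma Set.Finite.exists_list_pairwise_comp_le {S : Set β} (hS : S.Finite) (f : β → ℕ) :
    ∃ l : List β, (∀ x, x ∈ l ↔ x ∈ S) ∧ l.Nodup ∧ l.Pairwise (fun a b ↦ f a ≤ f b) := by
  refine ⟨hS.toFinset.toList.mergeSort (fun a b ↦ f a ≤ f b), by simp [List.mem_mergeSort],
    (List.mergeSort_perm _ _).nodup_iff.2 hS.toFinset.nodup_toList, ?_⟩
  refine (List.pairwise_mergeSort (le := fun a b ↦ f a ≤ f b) (fun a b c hab hbc ↦ ?_)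
    (fun a b ↦ ?_) hS.toFinset.toList).imp of_decide_eq_true
  · exact decide_eq_true ((of_decide_eq_true hab).trans (of_decide_eq_true hbc))
  · simpa using le_total (f a) (f b)

lemma exists_append_eq_of_lt {B : Fin s → β} {l : List β} {f : β → ℕ}
    (hsorted : l.Pairwise (fun a b ↦ f a ≤ f b)) (j : Fin l.length) {D : β}
    (hD : D ∈ Set.range B ∨ D ∈ l) (h : f D < f (l.get j)) :
    ∃ k < natAdd s j, append B l.get k = D := by
  obtain ⟨i, rfl⟩ | hD := hD
  · exact ⟨castAdd _ i, by simp only [Fin.lt_def, val_castAdd, val_natAdd]; omega, by simp⟩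
  obtain ⟨m, rfl⟩ := List.mem_iff_get.1 hD
  refine ⟨natAdd s m, ?_, by simp⟩
  have hmj : m < j := lt_of_not_ge fun hjm ↦ by
    obtain hjm | rfl := hjm.lt_or_eq
    · exact h.not_ge (hsorted.rel_get_of_lt hjm)
    · exact h.false
  simpa only [Fin.lt_def, val_natAdd, add_lt_add_iff_left] using hmj

lemma IsShelling.append {F : Fin s → Set α} {G : Fin n → Set α} (hF : IsShelling F)
    (hG : ∀ (j : Fin n) (i : Fin (s + n)), i < natAdd s j → ∃ k < natAdd s j,
      append F G i ∩ G j ⊆ append F G k ∩ G j ∧ (append F G k ∩ G j).ncard = (G j).ncard - 1) :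
    IsShelling (append F G) := by
  intro i j hij
  induction j using Fin.addCases with
  | right j => simpa using hG j i hij
  | left j =>
    induction i using Fin.addCases with
    | right i => simp only [Fin.lt_def, val_castAdd, val_natAdd] at hij; omega
    | left i =>
      obtain ⟨k, hk, h⟩ := hF i j (by simpa only [Fin.lt_def, val_castAdd] using hij)
      exact ⟨castAdd n k, by simpa only [Fin.lt_def, val_castAdd] using hk, by simpa using h⟩

lemma enumeratesBases_append {M : Matroid α} {B : Fin s → Set α} {l : List (Set α)}
    (hinj : Function.Injective B) (hbase : ∀ i, M.IsBase (B i))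
    (hl : ∀ C, C ∈ l ↔ M.IsBase C ∧ C ∉ Set.range B) (hnd : l.Nodup) :
    EnumeratesBases M (append B l.get) := by
  refine ⟨append_injective_iff.2 ⟨hinj, List.nodup_iff_injective_get.1 hnd,
    fun i j h ↦ ((hl _).1 (l.get_mem j)).2 ⟨i, h⟩⟩, fun k ↦ ?_, fun C hC ↦ ?_⟩
  · induction k using Fin.addCases with
    | left i => simpa using hbase i
    | right j => simpa using ((hl _).1 (l.get_mem j)).1
  · by_cases hCB : C ∈ Set.range B
    · obtain ⟨i, rfl⟩ := hCB
      exact ⟨castAdd _ i, by simp⟩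
    · obtain ⟨j, rfl⟩ := List.mem_iff_get.1 ((hl C).2 ⟨hC, hCB⟩)
      exact ⟨natAdd _ j, by simp⟩

lemma not_IP_subset_IP_append [LinearOrder α] [Finite α] {M : Matroid α} {B : Fin s → Set α}
    {l : List (Set α)}
    (hideal : ∀ C : Set α, M.IsBase C →
      (∃ i : Fin s, IP M (· < ·) C ⊆ IP M (· < ·) (B i)) → ∃ i : Fin s, B i = C)
    (hl : ∀ C, C ∈ l ↔ M.IsBase C ∧ C ∉ Set.range B) (hnd : l.Nodup)
    (hsorted : l.Pairwise (fun C D ↦ (IP M (· < ·) C).ncard ≤ (IP M (· < ·) D).ncard))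
    (j : Fin l.length) (i : Fin (s + l.length)) (hij : i < natAdd s j) :
    ¬ IP M (· < ·) (l.get j) ⊆ IP M (· < ·) (append B l.get i) := by
  intro hsub
  have hj := (hl _).1 (l.get_mem j)
  induction i using Fin.addCases with
  | left i => exact hj.2 (hideal _ hj.1 ⟨i, by simpa using hsub⟩)
  | right i =>
    rw [append_right] at hsub
    replace hij : i < j := by simpa only [Fin.lt_def, val_natAdd, add_lt_add_iff_left] using hij
    have hIP := eq_of_subset_of_ncard_le hsub (hsorted.rel_get_of_lt hij)
    exact hij.ne (hnd.get_inj_iff.1 (((hl _).1 (l.get_mem i)).1.eq_of_IP_eq hj.1 hIP.symm))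

end Append

theorem order_ideal_partial_shelling_extends_general
    {α : Type*} [Fintype α] [LinearOrder α]
    (M : Matroid α)
    {s : ℕ} (B : Fin s → Set α)
    (hbase : ∀ i, M.IsBase (B i)) (hinj : Function.Injective B)
    (hpartial : IsShelling B)
    (hideal : ∀ C : Set α, M.IsBase C →
      (∃ i : Fin s, IP M (· < ·) C ⊆ IP M (· < ·) (B i)) → ∃ i : Fin s, B i = C) :
    ∃ (t : ℕ) (hst : s ≤ t) (C : Fin t → Set α),
      EnumeratesBases M C ∧ IsShelling C ∧
        ∀ i : Fin s, C (Fin.castLE hst i) = B i := by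
  obtain ⟨l, hl, hnd, hsorted⟩ := (toFinite {C | M.IsBase C ∧ C ∉ range B})
    |>.exists_list_pairwise_comp_le (fun C ↦ (IP M (· < ·) C).ncard)
  have hC := enumeratesBases_append hinj hbase hl hnd
  refine ⟨s + l.length, Nat.le_add_right _ _, Fin.append B l.get, hC, hpartial.append ?_,
    Fin.append_left' _ _⟩
  intro j i hij
  obtain ⟨D, hD, hDj, hsub, hcard⟩ := (hC.2.1 i).exists_isBase_shelling_step
    ((hl _).1 (l.get_mem j)).1 (not_IP_subset_IP_append hideal hl hnd hsorted j i hij)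
  obtain ⟨k, hk, rfl⟩ := exists_append_eq_of_lt hsorted j
    ((em (D ∈ range B)).imp id fun hDB ↦ (hl D).2 ⟨hD, hDB⟩) (ncard_lt_ncard hDj)
  exact ⟨k, hk, hsub, hcard⟩

theorem order_ideal_partial_shelling_extends
    {α : Type*} [Fintype α] [LinearOrder α]
    (M : Matroid α) (hE : M.E = Set.univ)
    {s : ℕ} (B : Fin s → Set α)
    (hbase : ∀ i, M.IsBase (B i)) (hinj : Function.Injective B)
    (hpartial : IsShelling B)
    (hideal : ∀ C : Set α, M.IsBase C →
      (∃ i : Fin s, IP M (· < ·) C ⊆ IP M (· < ·) (B i)) → ∃ i : Fin s, B i = C) :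
    ∃ (t : ℕ) (hst : s ≤ t) (C : Fin t → Set α),
      EnumeratesBases M C ∧ IsShelling C ∧
        ∀ i : Fin s, C (Fin.castLE hst i) = B i :=
  order_ideal_partial_shelling_extends_general M B hbase hinj hpartial hideal
end

section
/- Let M be a matroid on a finite ground set E, let ℓ : E → ℝ be generic, and let B₁ be the basis of M with the strictly smallest ℓ-weight. Then for every basis B of M, the set difference B \ B₁ is contained in the internally passive set IP_{<_ℓ}(B), where <_ℓ is the linear order on E induced by ℓ. (Lemma 6.4 (lem:LasVergnas), after Las Vergnas, Proposition 2.5.) -/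
open scoped BigOperators

/-! For `b ∈ B \ B₁`, symmetric basis exchange yields `c ∈ B₁ \ B` such that both
`insert c (B \ {b})` and `insert b (B₁ \ {c})` are bases. The second one differs from `B₁`, so
minimality of `B₁` gives `ℓ c < ℓ b`, and the first one makes `c` witness `b ∈ IP(B)`. -/

open Set

namespace Matroid

variable {α : Type*} {M : Matroid α} {B B' : Set α} {e : α}

theorem IsBase.symmetric_exchange (hB : M.IsBase B) (hB' : M.IsBase B') (he : e ∈ B \ B') :
    ∃ f ∈ B' \ B, M.IsBase (insert f (B \ {e})) ∧ M.IsBase (insert e (B' \ {f})) := by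
  obtain ⟨heB, heB'⟩ := he
  have heE : e ∈ M.E := hB.subset_ground heB
  have hC := hB'.fundCircuit_isCircuit heE heB'
  -- `e` lies in the closure of the rest of its fundamental circuit, but not in `M.closure (B \ {e})`.
  have hC_not_sub : ¬ M.fundCircuit e B' \ {e} ⊆ M.closure (B \ {e}) := fun hsub =>
    hB.indep.notMem_closure_sdiff_of_mem heB <| M.closure_subset_closure_of_subset_closure hsub
      (hC.mem_closure_sdiff_singleton_of_mem (M.mem_fundCircuit e B'))
  obtain ⟨f, ⟨hfC, hfe⟩, hfcl⟩ := not_subset.1 hC_not_sub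
  have hfB' : f ∈ B' := (mem_insert_iff.1 (M.fundCircuit_subset_insert e B' hfC)).resolve_left hfe
  have hfB : f ∉ B := fun hfB =>
    hfcl (M.subset_closure _ (sdiff_subset.trans hB.subset_ground) ⟨hfB, hfe⟩)
  refine ⟨f, ⟨hfB', hfB⟩, hB.exchange_base_of_notMem_closure heB hfcl (hC.subset_ground hfC), ?_⟩
  rw [insert_sdiff_singleton_comm fun h => hfe h.symm]
  exact hB'.exchange_isBase_of_indep' hfB' heB'
    ((hB'.indep.mem_fundCircuit_iff (by rwa [hB'.closure_eq]) heB').1 hfC)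

end Matroid

lemma wt_insert_sdiff_singleton_s9 {α : Type*} (ℓ : α → ℝ) {B : Set α} {b c : α} (hB : B.Finite)
    (hb : b ∉ B) (hc : c ∈ B) : wt ℓ (insert b (B \ {c})) = wt ℓ B + ℓ b - ℓ c := by
  have hB_eq :=
    finsum_mem_insert ℓ (notMem_sdiff_of_mem (mem_singleton c)) (hB.sdiff (t := {c}))
  rw [insert_sdiff_singleton, insert_eq_of_mem hc] at hB_eq
  have h_insert := finsum_mem_insert ℓ (fun h => hb h.1) (hB.sdiff (t := {c}))
  unfold wt
  linarith

theorem diff_min_basis_subset_IP_general {α : Type*} [Fintype α]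
    (M : Matroid α)
    (ℓ : α → ℝ)
    (B₁ : Set α) (hB₁ : M.IsBase B₁)
    (hmin : ∀ C : Set α, M.IsBase C → C ≠ B₁ → wt ℓ B₁ < wt ℓ C) :
    ∀ B : Set α, M.IsBase B → B \ B₁ ⊆ IP M (fun x y => ℓ x < ℓ y) B := by
  intro B hB b hb
  obtain ⟨c, ⟨hcB₁, hcB⟩, hBc, hB₁b⟩ := hB.symmetric_exchange hB₁ hb
  have hne : insert b (B₁ \ {c}) ≠ B₁ := fun h => hb.2 (h ▸ mem_insert b _)
  have hlt := hmin _ hB₁b hne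
  rw [wt_insert_sdiff_singleton_s9 ℓ B₁.toFinite hb.2 hcB₁] at hlt
  exact ⟨hb.1, c, hcB, by linarith, hBc⟩

theorem diff_min_basis_subset_IP {α : Type*} [Fintype α]
    (M : Matroid α) (hE : M.E = Set.univ)
    (ℓ : α → ℝ) (hgen : Generic M ℓ)
    (B₁ : Set α) (hB₁ : M.IsBase B₁)
    (hmin : ∀ C : Set α, M.IsBase C → C ≠ B₁ → wt ℓ B₁ < wt ℓ C) :
    ∀ B : Set α, M.IsBase B → B \ B₁ ⊆ IP M (fun x y => ℓ x < ℓ y) B :=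
  diff_min_basis_subset_IP_general M ℓ B₁ hB₁ hmin
end

section
/- Let Δ be a pure finite simplicial complex and let F₁, …, Fₙ be a shelling order of Δ. Let v be a vertex of Δ with v ∉ F₁, and let F_j be the first facet of the shelling containing v (i.e., v ∈ F_j and v ∉ F_i for all i < j). Then the restriction set of F_j is exactly {v}: R(F_j) = {v}. (Lemma 6.5 (lem:restrictionVertices).) -/
/-! Since `v ∉ F 0`, the facet `F j` is not the first one, so the shelling condition yields an
earlier facet `F k` meeting `F j` in `|F j| - 1` points. As `v ∉ F k`, that intersection is
exactly `F j \ {v}`, so `v` lies in the restriction set. Conversely, an earlier facet containing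
`F j \ {x}` with `x ≠ v` would contain `v`. -/

theorem Set.sdiff_singleton_subset_of_ncard_inter_eq {α : Type*} {s t : Set α} {a : α}
    (hs : s.Finite) (ha : a ∈ s) (hat : a ∉ t) (h : (t ∩ s).ncard = s.ncard - 1) :
    s \ {a} ⊆ t := by
  have hsub : t ∩ s ⊆ s \ {a} := fun x ⟨hxt, hxs⟩ =>
    ⟨hxs, fun hxa => hat (Set.mem_singleton_iff.mp hxa ▸ hxt)⟩
  have heq : t ∩ s = s \ {a} := Set.eq_of_subset_of_ncard_le hsub
    (by rw [h, Set.ncard_sdiff_singleton_of_mem ha]) hs.sdiff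
  exact heq ▸ Set.inter_subset_left

section FirstFacetContaining

variable {α : Type*} {n : ℕ} {F : Fin n → Set α} {v : α} {j : Fin n}

theorem restrictionSet_subset_singleton_of_first_mem (hv : v ∈ F j)
    (hfirst : ∀ i < j, v ∉ F i) : restrictionSet F j ⊆ {v} := by
  rintro x ⟨-, i, hij, hsub⟩
  by_contra hxv
  exact hfirst i hij (hsub ⟨hv, Ne.symm hxv⟩)

theorem IsShelling.mem_restrictionSet_of_first_mem (hF : IsShelling F) (hfin : (F j).Finite)
    (hv : v ∈ F j) (hfirst : ∀ i < j, v ∉ F i) {i : Fin n} (hij : i < j) :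
    v ∈ restrictionSet F j := by
  obtain ⟨k, hkj, -, hcard⟩ := hF i j hij
  exact ⟨hv, k, hkj, Set.sdiff_singleton_subset_of_ncard_inter_eq hfin hv (hfirst k hkj) hcard⟩

end FirstFacetContaining

theorem restriction_set_of_first_facet_containing_vertex_general
    {α : Type*} {n : ℕ} (hn : 0 < n) (F : Fin n → Set α)
    (hfin : ∀ i, (F i).Finite)
    (hshell : IsShelling F)
    (v : α) (hv0 : v ∉ F ⟨0, hn⟩)
    (j : Fin n) (hj : v ∈ F j) (hjfirst : ∀ i : Fin n, i < j → v ∉ F i) :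
    restrictionSet F j = {v} := by
  have hj0 : (⟨0, hn⟩ : Fin n) < j :=
    lt_of_le_of_ne (Nat.zero_le _) fun h => hv0 (h ▸ hj)
  exact (restrictionSet_subset_singleton_of_first_mem hj hjfirst).antisymm
    (Set.singleton_subset_iff.mpr (hshell.mem_restrictionSet_of_first_mem (hfin j) hj hjfirst hj0))

theorem restriction_set_of_first_facet_containing_vertex
    {α : Type*} {n : ℕ} (hn : 0 < n) (F : Fin n → Set α)
    (hfin : ∀ i, (F i).Finite) (hinj : Function.Injective F)
    (r : ℕ) (hpure : ∀ i, (F i).ncard = r)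
    (hshell : IsShelling F)
    (v : α) (hv : ∃ i : Fin n, v ∈ F i) (hv0 : v ∉ F ⟨0, hn⟩)
    (j : Fin n) (hj : v ∈ F j) (hjfirst : ∀ i : Fin n, i < j → v ∉ F i) :
    restrictionSet F j = {v} :=
  restriction_set_of_first_facet_containing_vertex_general hn F hfin hshell v hv0 j hj hjfirst
end

section
/- Let M be a matroid of rank r on a finite ground set E and let B be any basis of M. Then the following identity of polynomials in t holds: Σ_k f_{k−1}(M) t^k (1−t)^{r−k} = Σ_{I} t^{|I|} · Σ_j h_j((M/I)|_B) t^j, where the outer sum on the right ranges over all independent sets I of M with I ∩ B = ∅, M/I denotes contraction of I, and (M/I)|_B denotes the restriction of M/I to the set B. Equivalently, h(M, t) = Σ_{I independent, I∩B=∅} t^{|I|} h((M/I)|_B, t). (Theorem of Klee–Samper restated in Section 7.) -/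
/-!
STATEMENT 17 (Theorem of Klee–Samper, Section 7): for a matroid `M` of rank `r`
and any basis `B`, as polynomials in `t`:
`h(M, t) = Σ_{I independent, I ∩ B = ∅} t^{|I|} · h((M/I)|_B, t)`,
where both `h`-polynomials are written via `h(N, t) = Σ_k f_{k-1}(N) t^k (1-t)^{d-k}`
with `d = rank N`. Since `I` is independent and disjoint from `B`, the
independent sets of `(M/I)|_B` are the `S ⊆ B` with `S ∪ I` independent in `M`,
and `rank (M/I)|_B = r - |I|`. The identity is stated for every `t : ℝ`.
-/

open scoped BigOperators Classical

/-- `f_{k-1}(M)`: the number of independent sets of `M` of cardinality `k`. -/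
noncomputable def fNum {α : Type*} (M : Matroid α) (k : ℕ) : ℕ :=
  {S : Set α | M.Indep S ∧ S.ncard = k}.ncard

/-- `f_{k-1}((M/I)|_B)`: the number of independent sets of cardinality `k` of
the matroid obtained from `M` by contracting the independent set `I` (disjoint
from `B`) and restricting to `B`. -/
noncomputable def fNumCR {α : Type*} (M : Matroid α) (I Bs : Set α) (k : ℕ) : ℕ :=
  {S : Set α | S ⊆ Bs ∧ M.Indep (S ∪ I) ∧ S.ncard = k}.ncard

/-!
Both sides are generating functions over the independent sets of `M`, weighted by
`t ^ |J| * (1 - t) ^ (r - |J|)`: on the right, the pair `(I, S)` stands for the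
independent set `J = I ∪ S`, and `J ↦ (J \ B, J ∩ B)` inverts this decomposition.
-/

open Finset

lemma Set.ncard_setOf_eq_card_filter {α : Type*} [Fintype α] (P : Set α → Prop) :
    {S : Set α | P S}.ncard = #{J : Finset α | P ↑J} := by
  rw [Set.ncard_eq_toFinset_card', Set.toFinset_card, ← Fintype.card_subtype]
  exact Fintype.card_congr
    (Equiv.subtypeEquiv Fintype.finsetEquivSet fun J => by simp [Fintype.finsetEquivSet]).symm

lemma Finset.sum_range_card_filter_mul {ι R : Type*} [NonAssocSemiring R] (s : Finset ι)
    (g : ι → ℕ) {n : ℕ} (h : ∀ i ∈ s, g i ≤ n) (f : ℕ → R) :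
    ∑ k ∈ range (n + 1), (#{i ∈ s | g i = k} : R) * f k = ∑ i ∈ s, f (g i) := by
  rw [← sum_fiberwise_of_maps_to' (fun i hi => mem_range_succ_iff.2 (h i hi))]
  simp only [sum_const, nsmul_eq_mul]

lemma Finset.disjoint_of_coe_subset_of_inter_eq_empty {α : Type*} {S I : Finset α} {B : Set α}
    (hSB : ↑S ⊆ B) (hIB : (I : Set α) ∩ B = ∅) : Disjoint S I := by
  rw [← disjoint_coe, Set.disjoint_iff_inter_eq_empty, Set.inter_comm]
  exact Set.subset_empty_iff.1 (hIB ▸ Set.inter_subset_inter_right _ hSB)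

namespace Matroid

variable {α : Type*} {M : Matroid α}

lemma Indep.ncard_le_of_forall_isBase_ncard_eq [M.RankFinite] {r : ℕ}
    (hr : ∀ C : Set α, M.IsBase C → C.ncard = r) {S : Set α} (hS : M.Indep S) :
    S.ncard ≤ r := by
  obtain ⟨C, hC, hSC⟩ := hS.exists_isBase_superset
  exact hr C hC ▸ Set.ncard_le_ncard hSC hC.finite

variable [Fintype α]

lemma sum_indep_eq_sum_sum_union {β : Type*} [AddCommMonoid β] (B : Set α) (F : Finset α → β) :
    ∑ J ∈ univ.filter (fun J : Finset α => M.Indep ↑J), F J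
      = ∑ I ∈ univ.filter (fun I : Finset α => M.Indep ↑I ∧ (I : Set α) ∩ B = ∅),
          ∑ S ∈ univ.filter (fun S : Finset α => ↑S ⊆ B ∧ M.Indep (↑S ∪ ↑I)), F (S ∪ I) := by
  rw [sum_sigma']
  refine sum_nbij' (fun J => ⟨J.filter (· ∉ B), J.filter (· ∈ B)⟩) (fun p => p.2 ∪ p.1)
    ?_ ?_ ?_ ?_ ?_
  · intro J hJ
    simp only [mem_sigma, mem_filter, mem_univ, true_and] at hJ ⊢
    refine ⟨⟨hJ.subset (coe_subset.2 (filter_subset _ _)), ?_⟩,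
      fun x hx => (mem_filter.1 hx).2, ?_⟩
    · ext x
      simp
    · rwa [← coe_union, filter_union_filter_not_eq]
  · rintro ⟨I, S⟩ hIS
    simp only [mem_sigma, mem_filter, mem_univ, true_and] at hIS ⊢
    rw [coe_union]
    exact hIS.2.2
  · intro J _
    exact filter_union_filter_not_eq (· ∈ B) J
  · rintro ⟨I, S⟩ hIS
    simp only [mem_sigma, mem_filter, mem_univ, true_and] at hIS
    obtain ⟨⟨-, hIB⟩, hSB, -⟩ := hIS
    have hI : ∀ x ∈ I, x ∉ B := fun x hx hxB => (hIB ▸ ⟨hx, hxB⟩ : x ∈ (∅ : Set α))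
    refine Sigma.ext ?_ (heq_of_eq ?_) <;> ext x <;> simp only [mem_filter, mem_union] <;> grind
  · intro J _
    rw [filter_union_filter_not_eq]

lemma fNum_eq_card_filter (k : ℕ) :
    fNum M k = #{J ∈ univ.filter (fun J : Finset α => M.Indep ↑J) | J.card = k} := by
  rw [fNum, Set.ncard_setOf_eq_card_filter, filter_filter]
  simp only [Set.ncard_coe_finset]

lemma fNumCR_eq_card_filter (I B : Set α) (k : ℕ) :
    fNumCR M I B k
      = #{S ∈ univ.filter (fun S : Finset α => ↑S ⊆ B ∧ M.Indep (↑S ∪ I)) | S.card = k} := by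
  rw [fNumCR, Set.ncard_setOf_eq_card_filter, filter_filter]
  simp only [Set.ncard_coe_finset, and_assoc]

lemma sum_range_fNum_mul {R : Type*} [NonAssocSemiring R] {r : ℕ}
    (hr : ∀ C : Set α, M.IsBase C → C.ncard = r) (f : ℕ → R) :
    ∑ k ∈ range (r + 1), (fNum M k : R) * f k
      = ∑ J ∈ univ.filter (fun J : Finset α => M.Indep ↑J), f J.card := by
  simp only [fNum_eq_card_filter]
  refine sum_range_card_filter_mul _ _ (fun J hJ => ?_) f
  simpa using (mem_filter.1 hJ).2.ncard_le_of_forall_isBase_ncard_eq hr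

lemma sum_range_fNumCR_mul {R : Type*} [NonAssocSemiring R] {r : ℕ}
    (hr : ∀ C : Set α, M.IsBase C → C.ncard = r) {I : Finset α} {B : Set α}
    (hIB : (I : Set α) ∩ B = ∅) (f : ℕ → R) :
    ∑ k ∈ range (r - I.card + 1), (fNumCR M ↑I B k : R) * f k
      = ∑ S ∈ univ.filter (fun S : Finset α => ↑S ⊆ B ∧ M.Indep (↑S ∪ ↑I)), f S.card := by
  simp only [fNumCR_eq_card_filter]
  refine sum_range_card_filter_mul _ _ (fun S hS => ?_) f
  obtain ⟨hSB, hSI⟩ := (mem_filter.1 hS).2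
  have := hSI.ncard_le_of_forall_isBase_ncard_eq hr
  rw [← coe_union, Set.ncard_coe_finset,
    card_union_of_disjoint (disjoint_of_coe_subset_of_inter_eq_empty hSB hIB)] at this
  omega

end Matroid

theorem klee_samper_h_polynomial_identity_general {α : Type*} [Fintype α]
    (M : Matroid α)
    (r : ℕ) (hr : ∀ C : Set α, M.IsBase C → C.ncard = r)
    (Bs : Set α) :
    ∀ t : ℝ,
      ∑ k ∈ Finset.range (r + 1), (fNum M k : ℝ) * t ^ k * (1 - t) ^ (r - k)
        = ∑ I ∈ Finset.univ.filter
            (fun I : Finset α => M.Indep (I : Set α) ∧ (I : Set α) ∩ Bs = ∅),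
            t ^ I.card *
              ∑ k ∈ Finset.range (r - I.card + 1),
                (fNumCR M (I : Set α) Bs k : ℝ) * t ^ k *
                  (1 - t) ^ (r - I.card - k) := by
  intro t
  simp only [mul_assoc]
  rw [Matroid.sum_range_fNum_mul hr, Matroid.sum_indep_eq_sum_sum_union Bs]
  refine sum_congr rfl fun I hI => ?_
  have hIB := (mem_filter.1 hI).2.2
  rw [Matroid.sum_range_fNumCR_mul hr hIB, mul_sum]
  refine sum_congr rfl fun S hS => ?_
  rw [card_union_of_disjoint (disjoint_of_coe_subset_of_inter_eq_empty (mem_filter.1 hS).2.1 hIB),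
    add_comm, ← Nat.sub_sub, pow_add]
  ring

theorem klee_samper_h_polynomial_identity {α : Type*} [Fintype α]
    (M : Matroid α) (hE : M.E = Set.univ)
    (r : ℕ) (hr : ∀ C : Set α, M.IsBase C → C.ncard = r)
    (Bs : Set α) (hBs : M.IsBase Bs) :
    ∀ t : ℝ,
      ∑ k ∈ Finset.range (r + 1), (fNum M k : ℝ) * t ^ k * (1 - t) ^ (r - k)
        = ∑ I ∈ Finset.univ.filter
            (fun I : Finset α => M.Indep (I : Set α) ∧ (I : Set α) ∩ Bs = ∅),
            t ^ I.card *
              ∑ k ∈ Finset.range (r - I.card + 1),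
                (fNumCR M (I : Set α) Bs k : ℝ) * t ^ k *
                  (1 - t) ^ (r - I.card - k) :=
  klee_samper_h_polynomial_identity_general M r hr Bs
end
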